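/- arXiv:1304.0184 — 3 statements merged into one kernel-verified Lean document; each statement's English description precedes it below -/
import Mathlib

section
/- Let a be an n×n complex matrix and let q(t) be a differentiable matrix-valued function such that det(1+q(t)) ≠ 0 for all t in an interval. Then q satisfies the matrix Riccati equation q'(t) = (1+q(t)) a (1−q(t)) if and only if the Cayley transform C(q(t)) = (1−q(t))(1+q(t))^{-1} satisfies the linear equation (d/dt) C(q(t)) = −2a·C(q(t)). -/
/-!
Writing `P = 1 + q` and `Q = 1 - q`, the product rule gives
`C(q)' = -q' P⁻¹ - Q P⁻¹ q' P⁻¹ = -(P + Q) P⁻¹ q' P⁻¹ = -2 P⁻¹ q' P⁻¹`, since `P + Q = 2`.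
Cancelling `-2` and multiplying by `P` on the right, `C(q)' = -2 a Q P⁻¹` becomes
`P⁻¹ q' = a Q`, i.e. the Riccati equation `q' = P a Q`.
-/

open Matrix Ring

attribute [local instance] Matrix.linftyOpNormedRing Matrix.linftyOpNormedAlgebra

section Cayley

variable {𝕜 R : Type*} [NontriviallyNormedField 𝕜] [NormedRing R] [HasSummableGeomSeries R]
  [NormedAlgebra 𝕜 R] {f : 𝕜 → R} {f' : R} {t : 𝕜}

theorem HasDerivAt.ringInverse (hf : HasDerivAt f f' t) (ht : IsUnit (f t)) :
    HasDerivAt (fun u => (f u)⁻¹ʳ) (-((f t)⁻¹ʳ * f' * (f t)⁻¹ʳ)) t := by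
  obtain ⟨x, hx⟩ := ht
  have hinv := hasFDerivAt_ringInverse (𝕜 := 𝕜) x
  rw [hx] at hinv
  rw [← hx, inverse_unit]
  exact hinv.comp_hasDerivAt t hf

theorem HasDerivAt.cayley (hf : HasDerivAt f f' t) (ht : IsUnit (1 + f t)) :
    HasDerivAt (fun u => (1 - f u) * (1 + f u)⁻¹ʳ)
      (-2 * ((1 + f t)⁻¹ʳ * f' * (1 + f t)⁻¹ʳ)) t := by
  refine ((hf.const_sub 1).mul ((hf.const_add 1).ringInverse ht)).congr_deriv ?_
  calc -f' * (1 + f t)⁻¹ʳ + (1 - f t) * -((1 + f t)⁻¹ʳ * f' * (1 + f t)⁻¹ʳ)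
      = -((1 + f t) * (1 + f t)⁻¹ʳ) * f' * (1 + f t)⁻¹ʳ
          + (1 - f t) * -((1 + f t)⁻¹ʳ * f' * (1 + f t)⁻¹ʳ) := by
        rw [mul_inverse_cancel _ ht]; noncomm_ring
    _ = -((1 + f t) + (1 - f t)) * ((1 + f t)⁻¹ʳ * f' * (1 + f t)⁻¹ʳ) := by noncomm_ring
    _ = -2 * ((1 + f t)⁻¹ʳ * f' * (1 + f t)⁻¹ʳ) := by
        rw [add_add_sub_cancel, one_add_one_eq_two]

end Cayley

theorem Ring.inverse_mul_mul_inverse_eq_mul_inverse_iff {M₀ : Type*} [MonoidWithZero M₀]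
    {p x y : M₀} (hp : IsUnit p) : p⁻¹ʳ * x * p⁻¹ʳ = y * p⁻¹ʳ ↔ x = p * y := by
  rw [hp.ringInverse.mul_left_inj, inverse_mul_eq_iff_eq_mul _ _ _ hp]

theorem riccati_iff_cayley_linear_general {n : ℕ} (a : Matrix (Fin n) (Fin n) ℂ)
    (s : Set ℝ)
    (q q' : ℝ → Matrix (Fin n) (Fin n) ℂ)
    (hdet : ∀ t ∈ s, (1 + q t).det ≠ 0)
    (hq : ∀ t ∈ s, HasDerivAt q (q' t) t) :
    (∀ t ∈ s, q' t = (1 + q t) * a * (1 - q t)) ↔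
      (∀ t ∈ s, HasDerivAt (fun u => (1 - q u) * (1 + q u)⁻¹)
        ((-2 : ℂ) • (a * ((1 - q t) * (1 + q t)⁻¹))) t) := by
  have h2 : IsUnit (2 : Matrix (Fin n) (Fin n) ℂ) := by
    simpa only [map_ofNat] using
      (isUnit_iff_ne_zero.2 (two_ne_zero' ℂ)).map (algebraMap ℂ (Matrix (Fin n) (Fin n) ℂ))
  simp only [nonsing_inv_eq_ringInverse]
  refine forall₂_congr fun t ht => ?_
  have hP : IsUnit (1 + q t) := (isUnit_iff_isUnit_det _).2 (hdet t ht).isUnit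
  have hC := (hq t ht).cayley hP
  refine Iff.trans ?_ ⟨hC.congr_deriv, hC.unique⟩
  rw [Algebra.smul_def, map_neg, map_ofNat, h2.neg.mul_right_inj, ← mul_assoc,
    inverse_mul_mul_inverse_eq_mul_inverse_iff hP, mul_assoc]

/-- Let `a` be an `n×n` complex matrix and `q(t)` a differentiable matrix-valued
function with `det(1 + q(t)) ≠ 0` on an interval.  Then `q` satisfies the matrix Riccati
equation `q' = (1+q) a (1−q)` iff the Cayley transform `C(q) = (1−q)(1+q)⁻¹` satisfies the
linear equation `(C(q))' = −2a · C(q)`. -/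
theorem riccati_iff_cayley_linear {n : ℕ} (a : Matrix (Fin n) (Fin n) ℂ)
    (s : Set ℝ) (hs : IsOpen s)
    (q q' : ℝ → Matrix (Fin n) (Fin n) ℂ)
    (hdet : ∀ t ∈ s, (1 + q t).det ≠ 0)
    (hq : ∀ t ∈ s, HasDerivAt q (q' t) t) :
    (∀ t ∈ s, q' t = (1 + q t) * a * (1 - q t)) ↔
      (∀ t ∈ s, HasDerivAt (fun u => (1 - q u) * (1 + q u)⁻¹)
        ((-2 : ℂ) • (a * ((1 - q t) * (1 + q t)⁻¹))) t) :=
  riccati_iff_cayley_linear_general a s q q' hdet hq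
end

section
/- Let a be an n×n complex matrix and b an n×n complex matrix with det(1+b) ≠ 0. Then q(t) := C^{-1}(e^{−2at} C(b)) = (1 − e^{−2at}C(b))(1 + e^{−2at}C(b))^{-1} solves the matrix Riccati initial value problem q'(t) = (1+q)a(1−q), q(0) = b, on any interval where det(1 + e^{−2at}C(b)) ≠ 0. -/
/-!
Write `M(t) = e^{-2at} C(b)` and `N = (1 + M)⁻¹`, so that `q = C(M) = (1 - M) N`. Differentiating
the inverse gives `q' = -(1 + q) M' N`, and with `M' = -2aM` and `1 - q = 2MN` this is
`(1 + q) a (1 - q)`. The initial condition holds because `C` is an involution on `{X | det(1+X) ≠ 0}`.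
-/

open Matrix NormedSpace

attribute [local instance] Matrix.linftyOpNormedRing Matrix.linftyOpNormedAlgebra

/-- The Cayley transform `C(X) = (1 − X)(1 + X)⁻¹`. -/
noncomputable def cayley {n : ℕ} (X : Matrix (Fin n) (Fin n) ℂ) : Matrix (Fin n) (Fin n) ℂ :=
  (1 - X) * (1 + X)⁻¹

section Cayley

variable {n : ℕ}

lemma one_add_cayley {X : Matrix (Fin n) (Fin n) ℂ} (hX : (1 + X).det ≠ 0) :
    1 + cayley X = (2 : ℂ) • (1 + X)⁻¹ := by
  have hinv : (1 + X) * (1 + X)⁻¹ = 1 := mul_nonsing_inv _ (isUnit_iff_ne_zero.mpr hX)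
  calc 1 + cayley X = (1 + X) * (1 + X)⁻¹ + (1 - X) * (1 + X)⁻¹ := by rw [hinv, cayley]
    _ = (2 : ℂ) • (1 + X)⁻¹ := by
      rw [← add_mul, show 1 + X + (1 - X) = 1 + 1 by abel, add_mul, one_mul, two_smul]

lemma one_sub_cayley {X : Matrix (Fin n) (Fin n) ℂ} (hX : (1 + X).det ≠ 0) :
    1 - cayley X = (2 : ℂ) • (X * (1 + X)⁻¹) := by
  have hinv : (1 + X) * (1 + X)⁻¹ = 1 := mul_nonsing_inv _ (isUnit_iff_ne_zero.mpr hX)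
  calc 1 - cayley X = (1 + X) * (1 + X)⁻¹ - (1 - X) * (1 + X)⁻¹ := by rw [hinv, cayley]
    _ = (2 : ℂ) • (X * (1 + X)⁻¹) := by
      rw [← sub_mul, two_smul, ← add_mul]; congr 1; abel

lemma cayley_cayley {X : Matrix (Fin n) (Fin n) ℂ} (hX : (1 + X).det ≠ 0) :
    cayley (cayley X) = X := by
  have hinv : (1 + X)⁻¹ * (1 + X) = 1 := nonsing_inv_mul _ (isUnit_iff_ne_zero.mpr hX)
  have h : (1 + cayley X)⁻¹ = (2 : ℂ)⁻¹ • (1 + X) := by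
    refine inv_eq_right_inv ?_
    rw [one_add_cayley hX, smul_mul_smul, hinv]
    norm_num
  rw [cayley, h, one_sub_cayley hX, smul_mul_smul, Matrix.mul_assoc, hinv]
  norm_num

lemma cayley_hasDerivAt {f : ℝ → Matrix (Fin n) (Fin n) ℂ} {f' : Matrix (Fin n) (Fin n) ℂ}
    {t : ℝ} (hf : HasDerivAt f f' t) (hdet : (1 + f t).det ≠ 0) :
    HasDerivAt (fun u => cayley (f u)) (-((1 + cayley (f t)) * f' * (1 + f t)⁻¹)) t := by
  have hu : IsUnit (1 + f t) := (isUnit_iff_isUnit_det _).2 (isUnit_iff_ne_zero.2 hdet)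
  have hinv : HasDerivAt (fun u => (1 + f u)⁻¹) (-((1 + f t)⁻¹ * f' * (1 + f t)⁻¹)) t := by
    have h := (hasFDerivAt_ringInverse (𝕜 := ℝ) hu.unit).comp_hasDerivAt t (hf.const_add 1)
    simp only [Function.comp_def, ← nonsing_inv_eq_ringInverse, coe_units_inv,
      IsUnit.unit_spec] at h
    exact h
  refine ((hf.const_sub 1).mul hinv).congr_deriv ?_
  rw [cayley]
  noncomm_ring

end Cayley

lemma hasDerivAt_exp_smul_mul {𝔸 : Type*} [NormedRing 𝔸] [NormedAlgebra ℂ 𝔸] [CompleteSpace 𝔸]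
    (c : ℂ) (a m : 𝔸) (t : ℝ) :
    HasDerivAt (fun u : ℝ => exp ((c * u) • a) * m) (c • (a * (exp ((c * t) • a) * m))) t := by
  have hlin : HasDerivAt (fun u : ℝ => c * u) c t := by
    simpa using (hasDerivAt_id t).ofReal_comp.const_mul c
  have := ((hasDerivAt_exp_smul_const' (𝕂 := ℂ) a (c * t)).scomp t hlin).mul_const m
  simpa [smul_mul_assoc, mul_assoc] using this

theorem riccati_solution_general {n : ℕ} (a b : Matrix (Fin n) (Fin n) ℂ)
    (hb : (1 + b).det ≠ 0) (s : Set ℝ)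
    (hdet : ∀ t ∈ s, (1 + NormedSpace.exp (((-2 : ℂ) * t) • a) * cayley b).det ≠ 0) :
    cayley (NormedSpace.exp (((-2 : ℂ) * (0 : ℝ)) • a) * cayley b) = b ∧
      ∀ t ∈ s, HasDerivAt (fun u : ℝ => cayley (NormedSpace.exp (((-2 : ℂ) * u) • a) * cayley b))
        ((1 + cayley (NormedSpace.exp (((-2 : ℂ) * t) • a) * cayley b)) * a *
          (1 - cayley (NormedSpace.exp (((-2 : ℂ) * t) • a) * cayley b))) t := by
  refine ⟨by simp [cayley_cayley hb], fun t ht => ?_⟩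
  have hM := hdet t ht
  refine (cayley_hasDerivAt (hasDerivAt_exp_smul_mul (-2) a (cayley b) t) hM).congr_deriv ?_
  rw [one_sub_cayley hM]
  simp only [Matrix.mul_smul, Matrix.smul_mul, neg_smul, Matrix.neg_mul, Matrix.mul_neg, neg_neg,
    Matrix.mul_assoc]
  -- the two sides differ only in going through the `linftyOpNormedRing` or the plain instances
  rfl

/-- For matrices `a`, `b` with `det(1+b) ≠ 0`, the function
`q(t) = C⁻¹(e^{−2at} C(b)) = (1 − e^{−2at}C(b))(1 + e^{−2at}C(b))⁻¹` solves the Riccati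
initial value problem `q' = (1+q)a(1−q)`, `q(0) = b`, on any interval where
`det(1 + e^{−2at}C(b)) ≠ 0`. -/
theorem riccati_solution {n : ℕ} (a b : Matrix (Fin n) (Fin n) ℂ)
    (hb : (1 + b).det ≠ 0) (s : Set ℝ) (hs : IsOpen s) (h0 : (0 : ℝ) ∈ s)
    (hdet : ∀ t ∈ s, (1 + NormedSpace.exp (((-2 : ℂ) * t) • a) * cayley b).det ≠ 0) :
    cayley (NormedSpace.exp (((-2 : ℂ) * (0 : ℝ)) • a) * cayley b) = b ∧
      ∀ t ∈ s, HasDerivAt (fun u : ℝ => cayley (NormedSpace.exp (((-2 : ℂ) * u) • a) * cayley b))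
        ((1 + cayley (NormedSpace.exp (((-2 : ℂ) * t) • a) * cayley b)) * a *
          (1 - cayley (NormedSpace.exp (((-2 : ℂ) * t) • a) * cayley b))) t :=
  riccati_solution_general a b hb s hdet
end

section
/- Let a be an n×n complex matrix and let g(t) be a nowhere-vanishing differentiable ℂ-valued function and q(t) a differentiable matrix function satisfying g'(t) = −(1/2) tr(a·q(t))·g(t) with q(t) = C^{-1}(e^{−2at}C(0)) = C^{-1}(e^{−2at}) = (1−e^{−2at})(1+e^{−2at})^{-1} and g(0) = 1. Then g(t) = det^{−1/2}((e^{at} + e^{−at})/2), where the branch of the square root is determined by continuity from g(0) = 1, on any interval where det(e^{at}+e^{−at}) ≠ 0. -/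
open Matrix NormedSpace

attribute [local instance] Matrix.linftyOpNormedRing Matrix.linftyOpNormedAlgebra

/-!
Write `h t = det (cosh (t a))`. By Jacobi's formula `h' = tr (adj N · N')` for `N = cosh (t a)`;
factoring `N = e^{ta} (1 + e^{-2ta}) / 2` and `N' = a e^{ta} (1 - e^{-2ta}) / 2`, and using that
`a` commutes with `e^{ta}`, this is `h' = tr (a q) h` wherever `h ≠ 0`. Hence `(g² h)' = 0` on the
convex set `s`, so `g² h` is constant there, equal to its value `1` at `t = 0`.
-/

theorem Convex.eq_of_forall_hasDerivWithinAt_zero {E : Type*} [NormedAddCommGroup E]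
    [NormedSpace ℝ E] {s : Set ℝ} {f : ℝ → E} (hs : Convex ℝ s)
    (hf : ∀ x ∈ s, HasDerivWithinAt f 0 s x) {x y : ℝ} (hx : x ∈ s) (hy : y ∈ s) :
    f x = f y := by
  have h := hs.norm_image_sub_le_of_norm_hasDerivWithin_le hf (fun _ _ => norm_zero.le) hx hy
  rw [zero_mul, norm_le_zero_iff, sub_eq_zero] at h
  exact h.symm

namespace Matrix

variable {ι R : Type*} [Fintype ι] [DecidableEq ι]

theorem prod_updateCol_apply_perm [CommMonoid R] (A : Matrix ι ι R) (b : ι → R)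
    (σ : Equiv.Perm ι) (j : ι) :
    ∏ i, A.updateCol j b (σ i) i = (∏ i ∈ Finset.univ.erase j, A (σ i) i) * b (σ j) := by
  rw [← Finset.prod_erase_mul _ _ (Finset.mem_univ j), updateCol_self]
  congr 1
  exact Finset.prod_congr rfl fun i hi => updateCol_ne (Finset.ne_of_mem_erase hi)

variable [CommRing R]

theorem trace_adjugate_mul_eq_sum_det_updateCol (A B : Matrix ι ι R) :
    (A.adjugate * B).trace = ∑ j, (A.updateCol j fun k => B k j).det := by
  simp only [trace, diag, mul_apply, ← cramer_apply, cramer_eq_adjugate_mulVec, mulVec,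
    dotProduct]

theorem trace_adjugate_mul_of_isUnit_det {A : Matrix ι ι R} (hA : IsUnit A.det)
    (B : Matrix ι ι R) : (A.adjugate * B).trace = A.det * (A⁻¹ * B).trace := by
  rw [inv_def, smul_mul_assoc, trace_smul, smul_eq_mul, ← mul_assoc,
    Ring.mul_inverse_cancel _ hA, one_mul]

theorem inv_smul_mul_smul {c : R} (hc : IsUnit c) {A : Matrix ι ι R} (hA : IsUnit A.det)
    (B : Matrix ι ι R) : (c • A)⁻¹ * (c • B) = A⁻¹ * B := by
  have hcA : IsUnit (c • A).det := by
    rw [det_smul]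
    exact (hc.pow _).mul hA
  calc (c • A)⁻¹ * (c • B) = (c • A)⁻¹ * (c • A * (A⁻¹ * B)) := by
        rw [smul_mul_assoc, mul_nonsing_inv_cancel_left _ _ hA]
    _ = A⁻¹ * B := nonsing_inv_mul_cancel_left _ _ hcA

theorem trace_inv_mul_one_add_mul_mul_one_sub {a E : Matrix ι ι R} (hE : IsUnit E)
    (haE : Commute a E) (X : Matrix ι ι R) :
    ((E * (1 + X))⁻¹ * (a * (E * (1 - X)))).trace = (a * ((1 - X) * (1 + X)⁻¹)).trace := by
  rw [mul_inv_rev, ← mul_assoc a, haE.eq, mul_assoc, mul_assoc, ← mul_assoc E⁻¹,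
    nonsing_inv_mul _ ((isUnit_iff_isUnit_det E).1 hE), one_mul, trace_mul_comm, mul_assoc]

end Matrix

section Jacobi

variable {𝕜 R ι : Type*} [NontriviallyNormedField 𝕜] [NormedCommRing R] [NormedAlgebra 𝕜 R]
  [Fintype ι] {M : 𝕜 → Matrix ι ι R} {M' : Matrix ι ι R} {t : 𝕜}

theorem HasDerivAt.matrix_apply (hM : HasDerivAt M M' t) (i j : ι) :
    HasDerivAt (fun u => M u i j) (M' i j) t :=
  hasDerivAt_pi.1 (hasDerivAt_pi.1 hM i) j

theorem HasDerivAt.det [DecidableEq ι] (hM : HasDerivAt M M' t) :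
    HasDerivAt (fun u => (M u).det) ((M t).adjugate * M').trace t := by
  simp only [trace_adjugate_mul_eq_sum_det_updateCol, det_apply', prod_updateCol_apply_perm]
  rw [Finset.sum_comm]
  refine HasDerivAt.fun_sum fun σ _ => ?_
  simpa only [Finset.mul_sum, smul_eq_mul] using
    (HasDerivAt.fun_finsetProd fun j _ => hM.matrix_apply (σ j) j).const_mul _

end Jacobi

theorem hasDerivAt_exp_ofReal_smul {𝔸 : Type*} [NormedRing 𝔸] [NormedAlgebra ℂ 𝔸]
    [CompleteSpace 𝔸] (b : 𝔸) (t : ℝ) :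
    HasDerivAt (fun u : ℝ => exp ((u : ℂ) • b)) (b * exp ((t : ℂ) • b)) t := by
  have h := (hasDerivAt_exp_smul_const' b (t : ℂ)).scomp t Complex.ofRealCLM.hasDerivAt
  rwa [Complex.ofRealCLM_apply, Complex.ofReal_one, one_smul] at h

section Cosh

variable {ι : Type*} [Fintype ι] [DecidableEq ι] (a : Matrix ι ι ℂ)

noncomputable def matrixCosh (t : ℝ) : Matrix ι ι ℂ :=
  (2 : ℂ)⁻¹ • (exp ((t : ℂ) • a) + exp ((-(t : ℂ)) • a))

theorem matrixCosh_zero : matrixCosh a 0 = 1 := by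
  rw [matrixCosh, Complex.ofReal_zero, neg_zero, zero_smul, exp_zero, ← two_smul ℂ, smul_smul,
    inv_mul_cancel₀ two_ne_zero, one_smul]

theorem hasDerivAt_matrixCosh (t : ℝ) :
    HasDerivAt (matrixCosh a)
      ((2 : ℂ)⁻¹ • (a * exp ((t : ℂ) • a) - a * exp ((-(t : ℂ)) • a))) t := by
  have hF := hasDerivAt_exp_ofReal_smul (-a) t
  simp only [smul_neg, ← neg_smul, neg_mul] at hF
  exact ((hasDerivAt_exp_ofReal_smul a t).add hF).const_smul (2 : ℂ)⁻¹

theorem exp_neg_ofReal_smul_eq_mul (t : ℝ) :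
    exp ((-(t : ℂ)) • a) = exp ((t : ℂ) • a) * exp (((-2 : ℂ) * t) • a) := by
  rw [← exp_add_of_commute _ _ (((Commute.refl a).smul_right _).smul_left _), ← add_smul]
  ring_nf

theorem hasDerivAt_det_matrixCosh {t : ℝ}
    (hdet : (exp ((t : ℂ) • a) + exp ((-(t : ℂ)) • a)).det ≠ 0) :
    HasDerivAt (fun u => (matrixCosh a u).det)
      ((a * ((1 - exp (((-2 : ℂ) * t) • a)) * (1 + exp (((-2 : ℂ) * t) • a))⁻¹)).trace *
        (matrixCosh a t).det) t := by
  set E := exp ((t : ℂ) • a)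
  set X := exp (((-2 : ℂ) * t) • a)
  have hsum : E + exp ((-(t : ℂ)) • a) = E * (1 + X) := by
    rw [exp_neg_ofReal_smul_eq_mul, mul_add, mul_one]
  have hdiff : a * E - a * exp ((-(t : ℂ)) • a) = a * (E * (1 - X)) := by
    rw [exp_neg_ofReal_smul_eq_mul, mul_sub, mul_one, mul_sub]
  have hcosh : matrixCosh a t = (2 : ℂ)⁻¹ • (E * (1 + X)) := congrArg _ hsum
  have hunit : IsUnit (E * (1 + X)).det := isUnit_iff_ne_zero.2 (hsum ▸ hdet)
  have htwo : IsUnit (2 : ℂ)⁻¹ := isUnit_iff_ne_zero.2 (by norm_num)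
  have hcoshDet : IsUnit (matrixCosh a t).det := by
    rw [hcosh, det_smul]
    exact (htwo.pow _).mul hunit
  have hE : IsUnit E := Matrix.isUnit_exp _
  have hcomm : Commute a E := ((Commute.refl a).smul_right _).exp_right
  refine (hasDerivAt_matrixCosh a t).det.congr_deriv ?_
  rw [hdiff, trace_adjugate_mul_of_isUnit_det hcoshDet, hcosh, inv_smul_mul_smul htwo hunit,
    trace_inv_mul_one_add_mul_mul_one_sub hE hcomm, mul_comm]

end Cosh

theorem amplitude_eq_det_inv_sqrt_general {n : ℕ} (a : Matrix (Fin n) (Fin n) ℂ)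
    (s : Set ℝ) (hconv : Convex ℝ s) (h0 : (0 : ℝ) ∈ s)
    (hdet : ∀ t ∈ s, (NormedSpace.exp ((t : ℂ) • a) + NormedSpace.exp ((-(t : ℂ)) • a)).det ≠ 0)
    (g : ℝ → ℂ)
    (hg : ∀ t ∈ s, HasDerivAt g
      (-(1 / 2) * Matrix.trace
        (a * ((1 - NormedSpace.exp (((-2 : ℂ) * t) • a)) * (1 + NormedSpace.exp (((-2 : ℂ) * t) • a))⁻¹)) * g t) t)
    (hg0 : g 0 = 1) :
    ∀ t ∈ s, (g t) ^ 2 * ((2 : ℂ)⁻¹ • (NormedSpace.exp ((t : ℂ) • a) + NormedSpace.exp ((-(t : ℂ)) • a))).det = 1 := by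
  intro t ht
  have hderiv : ∀ u ∈ s, HasDerivWithinAt (fun u => g u ^ 2 * (matrixCosh a u).det) 0 s u :=
    fun u hu => ((((hg u hu).fun_pow 2).mul (hasDerivAt_det_matrixCosh a (hdet u hu))).congr_deriv
      (by push_cast; ring)).hasDerivWithinAt
  have h := hconv.eq_of_forall_hasDerivWithinAt_zero hderiv h0 ht
  rw [matrixCosh_zero, det_one, hg0, one_pow, one_mul] at h
  exact h.symm

/-- Let `a` be an `n×n` complex matrix and `g` a nowhere-vanishing
differentiable scalar function with `g' = −(1/2) tr(a·q) g`, `g(0) = 1`, where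
`q(t) = C⁻¹(e^{−2at}) = (1−e^{−2at})(1+e^{−2at})⁻¹`.  Then
`g(t) = det^{−1/2}((e^{at}+e^{−at})/2)` (branch from `g(0)=1`), i.e.
`g(t)² · det((e^{at}+e^{−at})/2) = 1`, on any interval containing `0` where
`det(e^{at}+e^{−at}) ≠ 0`. -/
theorem amplitude_eq_det_inv_sqrt {n : ℕ} (a : Matrix (Fin n) (Fin n) ℂ)
    (s : Set ℝ) (hs : IsOpen s) (hconv : Convex ℝ s) (h0 : (0 : ℝ) ∈ s)
    (hdet : ∀ t ∈ s, (NormedSpace.exp ((t : ℂ) • a) + NormedSpace.exp ((-(t : ℂ)) • a)).det ≠ 0)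
    (g : ℝ → ℂ) (hgz : ∀ t ∈ s, g t ≠ 0)
    (hg : ∀ t ∈ s, HasDerivAt g
      (-(1 / 2) * Matrix.trace
        (a * ((1 - NormedSpace.exp (((-2 : ℂ) * t) • a)) * (1 + NormedSpace.exp (((-2 : ℂ) * t) • a))⁻¹)) * g t) t)
    (hg0 : g 0 = 1) :
    ∀ t ∈ s, (g t) ^ 2 * ((2 : ℂ)⁻¹ • (NormedSpace.exp ((t : ℂ) • a) + NormedSpace.exp ((-(t : ℂ)) • a))).det = 1 :=
  amplitude_eq_det_inv_sqrt_general a s hconv h0 hdet g hg hg0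
end
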